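/- Let f_1,…,f_n : ℝ^d → ℝ be L-smooth with L > 0, let p ∈ (0,1], and let W ∈ ℝ^{n×n} be a doubly stochastic matrix with consensus factor p, i.e. ‖Y W − Ȳ‖_F² ≤ (1−p)‖Y − Ȳ‖_F² for every Y ∈ ℝ^{d×n}. Let X ∈ ℝ^{d×n} with columns x_1,…,x_n and mean x̄ := (1/n)∑_i x_i, let G := ∂f(X) be the matrix of exact local gradients (i-th column ∇f_i(x_i)), let η ≥ 0 satisfy η² ≤ p²/(80 L²), and set X⁺ := (X − ηG)W. Then ‖X⁺ − X̄⁺‖_F² ≤ (1 − p/2)·‖X − X̄‖_F² + ((8 − 7p)/p)·η²·‖∂f(x̄)W − ∂̄f(x̄)‖_F², where ∂f(x̄) is the matrix whose i-th column is ∇f_i(x̄) and bars denote column-mean matrices. -/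

import Mathlib

/-- A matrix is doubly stochastic if all its entries are nonnegative and each
row and each column sums to 1. -/
def DoublyStochastic {n : ℕ} (W : Matrix (Fin n) (Fin n) ℝ) : Prop :=
  (∀ i j, 0 ≤ W i j) ∧ (∀ i, ∑ j, W i j = 1) ∧ (∀ j, ∑ i, W i j = 1)

/-- The column-mean matrix `X̄ := X·(1/n)𝟙𝟙ᵀ` of `X ∈ ℝ^{d×n}`. -/
noncomputable def colMean {d n : ℕ} (X : Matrix (Fin d) (Fin n) ℝ) :
    Matrix (Fin d) (Fin n) ℝ :=
  X * ((n : ℝ)⁻¹ • Matrix.of fun _ _ => (1 : ℝ))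

/-- The squared Frobenius norm `‖M‖_F²` of a matrix. -/
def frobSq {d n : ℕ} (M : Matrix (Fin d) (Fin n) ℝ) : ℝ := ∑ i, ∑ j, (M i j) ^ 2

/-- The matrix `∂f(x) ∈ ℝ^{d×n}` whose `i`-th column is `∇f_i(x)`. -/
noncomputable def gradMatAt {d n : ℕ} (f : Fin n → EuclideanSpace ℝ (Fin d) → ℝ)
    (x : EuclideanSpace ℝ (Fin d)) : Matrix (Fin d) (Fin n) ℝ :=
  Matrix.of fun a i => gradient (f i) x a

/-- The matrix `∂f(X) ∈ ℝ^{d×n}` whose `i`-th column is `∇f_i(x_i)`, where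
`x_i` is the `i`-th column of `X`. -/
noncomputable def gradMat {d n : ℕ} (f : Fin n → EuclideanSpace ℝ (Fin d) → ℝ)
    (X : Matrix (Fin d) (Fin n) ℝ) : Matrix (Fin d) (Fin n) ℝ :=
  Matrix.of fun a i => gradient (f i) (WithLp.toLp 2 (fun b => X b i) : EuclideanSpace ℝ (Fin d)) a

/-! ### Auxiliary lemmas -/

lemma frobSq_nonneg {d n : ℕ} (M : Matrix (Fin d) (Fin n) ℝ) : 0 ≤ frobSq M :=
  Finset.sum_nonneg fun _ _ => Finset.sum_nonneg fun _ _ => sq_nonneg _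

lemma frobSq_smul {d n : ℕ} (t : ℝ) (M : Matrix (Fin d) (Fin n) ℝ) :
    frobSq (t • M) = t ^ 2 * frobSq M := by
  simp [frobSq, Finset.mul_sum, mul_pow]

lemma frobSq_young {d n : ℕ} (A B : Matrix (Fin d) (Fin n) ℝ) (t : ℝ) (ht : 0 < t) :
    frobSq (A + B) ≤ (1 + t) * frobSq A + (1 + t⁻¹) * frobSq B := by
  have htt : t * t⁻¹ = 1 := mul_inv_cancel₀ ht.ne'
  have key : ∀ a b : ℝ, (a + b) ^ 2 ≤ (1 + t) * a ^ 2 + (1 + t⁻¹) * b ^ 2 := by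
    intro a b
    nlinarith [sq_nonneg (t * a - b), ht, htt, sq_nonneg a, sq_nonneg b,
      mul_pos ht ht]
  calc frobSq (A + B) = ∑ i, ∑ j, (A i j + B i j) ^ 2 := by simp [frobSq]
    _ ≤ ∑ i, ∑ j, ((1 + t) * (A i j) ^ 2 + (1 + t⁻¹) * (B i j) ^ 2) := by
        refine Finset.sum_le_sum fun i _ => Finset.sum_le_sum fun j _ => key _ _
    _ = (1 + t) * frobSq A + (1 + t⁻¹) * frobSq B := by
        simp [frobSq, Finset.sum_add_distrib, Finset.mul_sum]

lemma frobSq_eq_zero {d n : ℕ} {M : Matrix (Fin d) (Fin n) ℝ} (h : frobSq M = 0) :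
    M = 0 := by
  ext i j
  have h1 : (M i j) ^ 2 ≤ ∑ j', (M i j') ^ 2 :=
    Finset.single_le_sum (f := fun j' => (M i j') ^ 2) (fun _ _ => sq_nonneg _)
      (Finset.mem_univ j)
  have h2 : ∑ j', (M i j') ^ 2 ≤ frobSq M :=
    Finset.single_le_sum (f := fun i' => ∑ j', (M i' j') ^ 2)
      (fun _ _ => Finset.sum_nonneg fun _ _ => sq_nonneg _) (Finset.mem_univ i)
  have : (M i j) ^ 2 = 0 := le_antisymm (by linarith [h1, h2, h.le, h.ge]) (sq_nonneg _)
  simpa using pow_eq_zero_iff (n := 2) (by norm_num) |>.mp this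

lemma colMean_apply' {d n : ℕ} (M : Matrix (Fin d) (Fin n) ℝ) (a : Fin d) (j : Fin n) :
    colMean M a j = (n : ℝ)⁻¹ * ∑ k, M a k := by
  simp only [colMean, Matrix.mul_apply, Matrix.smul_apply, Matrix.of_apply, smul_eq_mul,
    mul_one]
  rw [Finset.mul_sum]
  change ∑ k, M a k * (((n : ℝ)⁻¹ • (Matrix.of fun _ _ => (1 : ℝ)) : Matrix (Fin n) (Fin n) ℝ) k j) = _
  simp [mul_comm]

lemma row_proj {n : ℕ} (x : Fin n → ℝ) :
    ∑ j, (x j - (n : ℝ)⁻¹ * ∑ k, x k) ^ 2 ≤ ∑ j, (x j) ^ 2 := by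
  rcases Nat.eq_zero_or_pos n with hn | hn
  · subst hn; simp
  set S := ∑ k, x k with hS
  set m := (n : ℝ)⁻¹ * S with hm
  have hnn : (0 : ℝ) < n := by exact_mod_cast hn
  have hexp : ∑ j, (x j - m) ^ 2 = (∑ j, (x j) ^ 2) - 2 * m * S + n * m ^ 2 := by
    have : ∀ j ∈ Finset.univ, (x j - m) ^ 2 = (x j) ^ 2 - 2 * m * x j + m ^ 2 := by
      intro j _; ring
    rw [Finset.sum_congr rfl this]
    rw [Finset.sum_add_distrib, Finset.sum_sub_distrib, ← Finset.mul_sum, ← hS,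
      Finset.sum_const]
    simp [Finset.card_univ]
  rw [hexp]
  have h1 : (n : ℝ) * m ^ 2 = (n : ℝ)⁻¹ * S ^ 2 := by
    rw [hm]; field_simp
  have h2 : 2 * m * S = 2 * ((n : ℝ)⁻¹ * S ^ 2) := by rw [hm]; ring
  have h3 : 0 ≤ (n : ℝ)⁻¹ * S ^ 2 := by positivity
  nlinarith

lemma frobSq_sub_colMean_le {d n : ℕ} (M : Matrix (Fin d) (Fin n) ℝ) :
    frobSq (M - colMean M) ≤ frobSq M := by
  refine Finset.sum_le_sum fun a _ => ?_
  have : ∀ j ∈ Finset.univ, (M - colMean M) a j ^ 2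
      = (M a j - (n : ℝ)⁻¹ * ∑ k, M a k) ^ 2 := by
    intro j _; rw [Matrix.sub_apply, colMean_apply']
  rw [Finset.sum_congr rfl this]
  exact row_proj fun j => M a j

noncomputable def Jm (n : ℕ) : Matrix (Fin n) (Fin n) ℝ :=
  (n : ℝ)⁻¹ • Matrix.of fun _ _ => (1 : ℝ)

lemma colMean_eq {d n : ℕ} (Y : Matrix (Fin d) (Fin n) ℝ) : colMean Y = Y * Jm n := rfl

lemma W_mul_Jm {n : ℕ} (W : Matrix (Fin n) (Fin n) ℝ) (hW : DoublyStochastic W) :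
    W * Jm n = Jm n := by
  ext i j
  simp only [Jm, Matrix.mul_apply, Matrix.smul_apply, Matrix.of_apply, smul_eq_mul, mul_one]
  rw [← Finset.sum_mul, hW.2.1 i, one_mul]

lemma Jm_mul_W {n : ℕ} (W : Matrix (Fin n) (Fin n) ℝ) (hW : DoublyStochastic W) :
    Jm n * W = Jm n := by
  ext i j
  simp only [Jm, Matrix.mul_apply, Matrix.smul_apply, Matrix.of_apply, smul_eq_mul, mul_one]
  rw [← Finset.mul_sum, hW.2.2 j]
  simp

lemma Jm_mul_Jm {n : ℕ} (hn : n ≠ 0) : Jm n * Jm n = Jm n := by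
  ext i j
  simp only [Jm, Matrix.mul_apply, Matrix.smul_apply, Matrix.of_apply, smul_eq_mul, mul_one]
  rw [Finset.sum_const, Finset.card_univ, Fintype.card_fin, nsmul_eq_mul]
  have : (n : ℝ) ≠ 0 := Nat.cast_ne_zero.mpr hn
  field_simp

lemma colMean_mul_W {d n : ℕ} (W : Matrix (Fin n) (Fin n) ℝ) (hW : DoublyStochastic W)
    (Y : Matrix (Fin d) (Fin n) ℝ) : colMean Y * W = colMean Y := by
  rw [colMean_eq, Matrix.mul_assoc, Jm_mul_W W hW]

lemma colMean_of_mul_W {d n : ℕ} (W : Matrix (Fin n) (Fin n) ℝ) (hW : DoublyStochastic W)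
    (Y : Matrix (Fin d) (Fin n) ℝ) : colMean (Y * W) = colMean Y := by
  rw [colMean_eq, colMean_eq, Matrix.mul_assoc, W_mul_Jm W hW]

lemma colMean_colMean {d n : ℕ} (hn : n ≠ 0) (Y : Matrix (Fin d) (Fin n) ℝ) :
    colMean (colMean Y) = colMean Y := by
  rw [colMean_eq, colMean_eq, Matrix.mul_assoc, Jm_mul_Jm hn]

lemma main_ident {d n : ℕ} (W : Matrix (Fin n) (Fin n) ℝ) (hW : DoublyStochastic W)
    (η : ℝ) (X G H : Matrix (Fin d) (Fin n) ℝ) :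
    (X - η • G) * W - colMean ((X - η • G) * W)
      = (X - colMean X) * W + (-η) • ((G - H) * W - colMean (G - H))
        + (-η) • (H * W - colMean H) := by
  rw [colMean_of_mul_W W hW]
  have h1 : colMean (X - η • G) = colMean X - η • colMean G := by
    rw [colMean_eq, colMean_eq, colMean_eq, Matrix.sub_mul, Matrix.smul_mul]
  have h2 : colMean (G - H) = colMean G - colMean H := by
    rw [colMean_eq, colMean_eq, colMean_eq, Matrix.sub_mul]
  rw [h1, h2, Matrix.sub_mul, Matrix.sub_mul, Matrix.sub_mul, Matrix.smul_mul,
    colMean_mul_W W hW]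
  module

lemma enorm_sq {d : ℕ} (v : EuclideanSpace ℝ (Fin d)) : ‖v‖ ^ 2 = ∑ a, (v a) ^ 2 := by
  rw [EuclideanSpace.norm_eq, Real.sq_sqrt (by positivity)]
  simp [Real.norm_eq_abs, sq_abs]

lemma smooth_bound {d n : ℕ} (L : ℝ)
    (f : Fin n → EuclideanSpace ℝ (Fin d) → ℝ)
    (hLsmooth : ∀ i x y, ‖gradient (f i) x - gradient (f i) y‖ ≤ L * ‖x - y‖)
    (X : Matrix (Fin d) (Fin n) ℝ) (xbar : EuclideanSpace ℝ (Fin d))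
    (hxb : ∀ a, xbar a = (n : ℝ)⁻¹ * ∑ k, X a k) :
    frobSq (gradMat f X - gradMatAt f xbar) ≤ L ^ 2 * frobSq (X - colMean X) := by
  have key : ∀ i : Fin n,
      ∑ a, ((gradMat f X - gradMatAt f xbar) a i) ^ 2
        ≤ L ^ 2 * ∑ a, ((X - colMean X) a i) ^ 2 := by
    intro i
    set xi : EuclideanSpace ℝ (Fin d) := WithLp.toLp 2 (fun b => X b i) with hxi
    have h1 : ∑ a, ((gradMat f X - gradMatAt f xbar) a i) ^ 2
        = ‖gradient (f i) xi - gradient (f i) xbar‖ ^ 2 := by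
      rw [enorm_sq]
      refine Finset.sum_congr rfl fun a _ => ?_
      congr 1
    have h2 : ∑ a, ((X - colMean X) a i) ^ 2 = ‖xi - xbar‖ ^ 2 := by
      rw [enorm_sq]
      refine Finset.sum_congr rfl fun a _ => ?_
      congr 1
      rw [Matrix.sub_apply, colMean_apply']
      rw [show (xi - xbar) a = xi a - xbar a from rfl, hxb a, hxi]
    rw [h1, h2]
    have := hLsmooth i xi xbar
    have hn : 0 ≤ ‖xi - xbar‖ := norm_nonneg _
    nlinarith [norm_nonneg (gradient (f i) xi - gradient (f i) xbar)]
  calc frobSq (gradMat f X - gradMatAt f xbar)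
      = ∑ i, ∑ a, ((gradMat f X - gradMatAt f xbar) a i) ^ 2 := by
        rw [frobSq]; exact Finset.sum_comm
    _ ≤ ∑ i, L ^ 2 * ∑ a, ((X - colMean X) a i) ^ 2 := Finset.sum_le_sum fun i _ => key i
    _ = L ^ 2 * frobSq (X - colMean X) := by
        rw [← Finset.mul_sum, frobSq, Finset.sum_comm]

lemma final_arith (p a c s L2 : ℝ) (hp0 : 0 < p) (hp1 : p < 1) (ha : 0 ≤ a)
    (hc : 0 ≤ c) (hs : 0 ≤ s) (hL2 : 0 ≤ L2) (hsl : s * L2 ≤ p ^ 2 / 80) :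
    (1 + p / (8 * (1 - p))) *
        ((1 + p / 8) * ((1 - p) * a) + (1 + (p / 8)⁻¹) * (s * ((1 - p) * (L2 * a))))
      + (1 + (p / (8 * (1 - p)))⁻¹) * (s * c)
      ≤ (1 - p / 2) * a + (8 - 7 * p) / p * s * c := by
  have h1p : (0:ℝ) < 1 - p := by linarith
  rw [inv_div, inv_div]
  have hCeq : (1 + 8 * (1 - p) / p) * (s * c) = (8 - 7 * p) / p * s * c := by
    field_simp; ring
  rw [hCeq]
  have hsla : s * (L2 * a) ≤ p ^ 2 / 80 * a := by nlinarith
  have hq : 0 < 1 + p / (8 * (1 - p)) := by positivity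
  have step1 : (1 + p / (8 * (1 - p))) *
      ((1 + p / 8) * ((1 - p) * a) + (1 + 8 / p) * (s * ((1 - p) * (L2 * a))))
      ≤ (1 + p / (8 * (1 - p))) *
      ((1 + p / 8) * ((1 - p) * a) + (1 + 8 / p) * ((1 - p) * (p ^ 2 / 80 * a))) := by
    apply mul_le_mul_of_nonneg_left _ hq.le
    apply add_le_add_right
    apply mul_le_mul_of_nonneg_left _ (by positivity)
    calc s * ((1 - p) * (L2 * a)) = (1 - p) * (s * (L2 * a)) := by ring
      _ ≤ (1 - p) * (p ^ 2 / 80 * a) := mul_le_mul_of_nonneg_left hsla h1p.le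
  have step2 : (1 + p / (8 * (1 - p))) *
      ((1 + p / 8) * ((1 - p) * a) + (1 + 8 / p) * ((1 - p) * (p ^ 2 / 80 * a)))
      ≤ (1 - p / 2) * a := by
    rw [← sub_nonneg]
    have hexp : (1 - p / 2) * a - (1 + p / (8 * (1 - p))) *
        ((1 + p / 8) * ((1 - p) * a) + (1 + 8 / p) * ((1 - p) * (p ^ 2 / 80 * a)))
        = a * (3 / 20 * p + 59 / 320 * p ^ 2 + 7 / 640 * p ^ 3) := by
      field_simp
      ring
    rw [hexp]
    positivity
  linarith

set_option maxHeartbeats 1000000 in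
/-- One-step consensus recursion for exact D-SGD: for `L`-smooth local
objectives, a doubly stochastic mixing matrix `W` with consensus factor `p`,
a step size with `η² ≤ p²/(80L²)`, `G := ∂f(X)` and `X⁺ := (X − ηG)W`,
`‖X⁺ − X̄⁺‖_F² ≤ (1 − p/2)‖X − X̄‖_F² + ((8 − 7p)/p)η²‖∂f(x̄)W − ∂̄f(x̄)‖_F²`,
where `x̄` is the average of the columns of `X`. -/
theorem consensus_recursion_step
    (d n : ℕ) (L : ℝ) (hL : 0 < L)
    (f : Fin n → EuclideanSpace ℝ (Fin d) → ℝ)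
    (hdiff : ∀ i, Differentiable ℝ (f i))
    (hLsmooth : ∀ i x y, ‖gradient (f i) x - gradient (f i) y‖ ≤ L * ‖x - y‖)
    (p : ℝ) (hp : p ∈ Set.Ioc (0 : ℝ) 1)
    (W : Matrix (Fin n) (Fin n) ℝ) (hW : DoublyStochastic W)
    (hcons : ∀ Y : Matrix (Fin d) (Fin n) ℝ,
      frobSq (Y * W - colMean Y) ≤ (1 - p) * frobSq (Y - colMean Y))
    (X : Matrix (Fin d) (Fin n) ℝ)
    (xbar : EuclideanSpace ℝ (Fin d))
    (hxbar : xbar = (n : ℝ)⁻¹ • ∑ i, (WithLp.toLp 2 (fun b => X b i) : EuclideanSpace ℝ (Fin d)))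
    (η : ℝ) (hη : 0 ≤ η) (hηsmall : η ^ 2 ≤ p ^ 2 / (80 * L ^ 2)) :
    frobSq ((X - η • gradMat f X) * W - colMean ((X - η • gradMat f X) * W))
      ≤ (1 - p / 2) * frobSq (X - colMean X)
        + ((8 - 7 * p) / p) * η ^ 2 *
            frobSq (gradMatAt f xbar * W - colMean (gradMatAt f xbar)) := by
  obtain ⟨hp0, hp1⟩ := hp
  rcases Nat.eq_zero_or_pos n with hn0 | hn0
  · subst hn0
    simp [frobSq]
  have hn : n ≠ 0 := hn0.ne'
  set G := gradMat f X with hG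
  set H := gradMatAt f xbar with hH
  set Δ := X - colMean X with hΔ
  set B := (G - H) * W - colMean (G - H) with hBdef
  set C := H * W - colMean H with hCdef
  have hid : (X - η • G) * W - colMean ((X - η • G) * W)
      = Δ * W + (-η) • B + (-η) • C := main_ident W hW η X G H
  have hΔbar : colMean Δ = 0 := by
    rw [hΔ, colMean_eq, Matrix.sub_mul, ← colMean_eq, ← colMean_eq,
      colMean_colMean hn, sub_self]
  have hU : frobSq (Δ * W) ≤ (1 - p) * frobSq Δ := by
    have := hcons Δ
    rwa [hΔbar, sub_zero, sub_zero] at this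
  have hxb : ∀ a, xbar a = (n : ℝ)⁻¹ * ∑ k, X a k := by
    intro a
    rw [hxbar]
    simp [Finset.sum_apply]
  have hGH : frobSq (G - H) ≤ L ^ 2 * frobSq Δ :=
    smooth_bound L f hLsmooth X xbar hxb
  have hB : frobSq B ≤ (1 - p) * (L ^ 2 * frobSq Δ) := by
    calc frobSq B ≤ (1 - p) * frobSq ((G - H) - colMean (G - H)) := hcons (G - H)
      _ ≤ (1 - p) * frobSq (G - H) :=
          mul_le_mul_of_nonneg_left (frobSq_sub_colMean_le _) (by linarith)
      _ ≤ (1 - p) * (L ^ 2 * frobSq Δ) :=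
          mul_le_mul_of_nonneg_left hGH (by linarith)
  have ha := frobSq_nonneg Δ
  have hcC := frobSq_nonneg C
  rw [hid]
  rcases eq_or_lt_of_le hp1 with hpe | hpl
  · -- p = 1
    subst hpe
    have hUz : Δ * W = 0 :=
      frobSq_eq_zero (le_antisymm (by linarith [frobSq_nonneg (Δ * W)]) (frobSq_nonneg _))
    have hBz : B = 0 :=
      frobSq_eq_zero (le_antisymm
        (by nlinarith [frobSq_nonneg B, frobSq_nonneg Δ, sq_nonneg L]) (frobSq_nonneg _))
    rw [hUz, hBz, smul_zero, add_zero, zero_add, frobSq_smul,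
      show (-η) ^ 2 = η ^ 2 by ring]
    nlinarith [mul_nonneg (sq_nonneg η) hcC]
  · -- p < 1
    have h1p : (0:ℝ) < 1 - p := by linarith
    have hα : (0:ℝ) < p / (8 * (1 - p)) := by positivity
    have hγ : (0:ℝ) < p / 8 := by positivity
    have hy2 := frobSq_young (Δ * W + (-η) • B) ((-η) • C) _ hα
    have hy1 := frobSq_young (Δ * W) ((-η) • B) _ hγ
    rw [frobSq_smul, show (-η) ^ 2 = η ^ 2 by ring] at hy1 hy2
    have hsl : η ^ 2 * L ^ 2 ≤ p ^ 2 / 80 := by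
      have h := mul_le_mul_of_nonneg_right hηsmall (sq_nonneg L)
      have h2 : p ^ 2 / (80 * L ^ 2) * L ^ 2 = p ^ 2 / 80 := by
        field_simp
      linarith
    calc frobSq (Δ * W + (-η) • B + (-η) • C)
        ≤ (1 + p / (8 * (1 - p))) * frobSq (Δ * W + (-η) • B)
            + (1 + (p / (8 * (1 - p)))⁻¹) * (η ^ 2 * frobSq C) := hy2
      _ ≤ (1 + p / (8 * (1 - p))) *
            ((1 + p / 8) * ((1 - p) * frobSq Δ)
              + (1 + (p / 8)⁻¹) * (η ^ 2 * ((1 - p) * (L ^ 2 * frobSq Δ))))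
            + (1 + (p / (8 * (1 - p)))⁻¹) * (η ^ 2 * frobSq C) := by
          apply add_le_add_left
          apply mul_le_mul_of_nonneg_left _ (by positivity)
          calc frobSq (Δ * W + (-η) • B)
              ≤ (1 + p / 8) * frobSq (Δ * W) + (1 + (p / 8)⁻¹) * (η ^ 2 * frobSq B) := hy1
            _ ≤ _ := by
                apply add_le_add
                · exact mul_le_mul_of_nonneg_left hU (by positivity)
                · exact mul_le_mul_of_nonneg_left
                    (mul_le_mul_of_nonneg_left hB (sq_nonneg η)) (by positivity)
      _ ≤ (1 - p / 2) * frobSq Δ + (8 - 7 * p) / p * η ^ 2 * frobSq C := by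
          have hfa := final_arith p (frobSq Δ) (frobSq C) (η ^ 2) (L ^ 2) hp0 hpl ha hcC
            (sq_nonneg η) (sq_nonneg L) hsl
          linarith
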